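/- Let n ≥ 2 and let G be the anticycle on the n+3 vertices x, z_1, z_2, y_1,…,y_n, with J = I(H) the edge ideal of the induced antipath H = G \ {x}. Fix 1 ≤ i ≤ j ≤ n with (i,j) ≠ (1,1), and let I' be the sum of J^2, (x z_1 z_2 y_l : 1 ≤ l ≤ n), ( x y_k y_l z_2 : 1 ≤ k ≤ l ≤ n, (k,l) ≠ (n,n) ), ( x y_k y_l z_1 : 1 ≤ k ≤ l ≤ n, (k,l) ≠ (1,1) ), ( x y_{i'} y_{j'} y_{k'} : 1 ≤ i' ≤ j' ≤ k' ≤ n, i' + 2 ≤ k' ), and ( x^2 y_k y_l : 1 ≤ k ≤ l ≤ n, (k,l) ≠ (1,1), (k,l) strictly dictionary-smaller than (i,j) ). Then the colon ideal I' : (x^2 y_i y_j) is generated by a subset of the variables of R. -/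

import Mathlib

open MvPolynomial

/-! The anticycle `G` on the `n+3` vertices `x, z₁, y₁, …, y_n, z₂`, realized on `Fin (n+3)`
with the cycle labeling `x = 0`, `z₁ = 1`, `y_i = i+1` (so `y_i` has index `i+2` for the
0-indexed `i : Fin n`), `z₂ = n+2`.  The non-edges of `G` are exactly the consecutive pairs
on the cycle `x ∼ z₁ ∼ y₁ ∼ ⋯ ∼ y_n ∼ z₂ ∼ x`. -/

/-- The vertex `x`. -/
def vx (n : ℕ) : Fin (n + 3) := ⟨0, by omega⟩
/-- The vertex `z₁`. -/
def vz1 (n : ℕ) : Fin (n + 3) := ⟨1, by omega⟩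
/-- The vertex `z₂`. -/
def vz2 (n : ℕ) : Fin (n + 3) := ⟨n + 2, by omega⟩
/-- The vertex `y_i` (0-indexed: `vy n i` is `y_{i+1}` of the paper). -/
def vy (n : ℕ) (i : Fin n) : Fin (n + 3) := ⟨(i : ℕ) + 2, by omega⟩

/-- The edge ideal `J = I(H)` of the induced antipath `H = G \ {x}` on the vertices
`z₁, y₁, …, y_n, z₂` (indices `1, …, n+2`): its edges are the pairs of non-consecutive
indices among `1, …, n+2`. -/
noncomputable def Jideal (K : Type*) [Field K] (n : ℕ) :
    Ideal (MvPolynomial (Fin (n + 3)) K) :=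
  Ideal.span { m | ∃ a b : Fin (n + 3),
    1 ≤ (a : ℕ) ∧ (a : ℕ) + 2 ≤ (b : ℕ) ∧ m = X a * X b }

/-! `I'` is a monomial ideal and `x²y_iy_j` a monomial, so a polynomial lies in the colon iff
each of its monomials times `x²y_iy_j` is divisible by a generator of `I'`. Hence the colon is
generated by the variables it contains as soon as every generator of `I'` exceeds `x²y_iy_j` in
the exponent of one of those variables. A variable is shown to lie in the colon by a generator
dividing it times `x²y_iy_j`; in the paper's indexing this gives `z₁`, `z₂` unless `i = j = n`,
every `y_l` with `l ≥ i + 2`, and every `y_l` with `l < j` except `y_1` when `(i, j) = (1, 2)`.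
When `j ≥ i + 2` these are all the variables but `x`, and every generator, of degree 4 with
fewer than two factors `x`, exceeds `x²y_iy_j` at another variable. Otherwise only `x`, `y_i`,
`y_{i+1}` can be missing, and the generators are matched with a variable family by family. -/

theorem Finsupp.exists_ne_lt_apply_of_degree_eq {σ : Type*} {s d : σ →₀ ℕ} {x : σ}
    (hdeg : s.degree = d.degree) (hx : s x < d x) : ∃ v ≠ x, d v < s v := by
  by_contra! h
  have hle : s ≤ d := fun v => (eq_or_ne v x).elim (fun hv => hv ▸ hx.le) (h v)
  have hzero : (d - s).degree = 0 := by
    have := congrArg Finsupp.degree (tsub_add_cancel_of_le hle)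
    rw [map_add] at this
    omega
  have := DFunLike.congr_fun ((Finsupp.degree_eq_zero_iff _).mp hzero) x
  simp only [Finsupp.coe_tsub, Pi.sub_apply, Finsupp.coe_zero, Pi.zero_apply] at this
  omega

namespace MvPolynomial

variable {σ R : Type*} [CommSemiring R]

noncomputable def quadExp (a b c e : σ) : σ →₀ ℕ :=
  Finsupp.single a 1 + Finsupp.single b 1 + Finsupp.single c 1 + Finsupp.single e 1

@[simp]
theorem quadExp_apply [DecidableEq σ] (a b c e v : σ) :
    quadExp a b c e v = (if a = v then 1 else 0) + (if b = v then 1 else 0) +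
      (if c = v then 1 else 0) + (if e = v then 1 else 0) := by
  simp [quadExp, Finsupp.single_apply]

theorem X_mul_X_mul_X_mul_X (a b c e : σ) :
    (X a * X b * X c * X e : MvPolynomial σ R) = monomial (quadExp a b c e) 1 := by
  simp [quadExp, X, monomial_mul]

@[simp]
theorem degree_quadExp (a b c e : σ) : (quadExp a b c e).degree = 4 := by
  simp [quadExp]

theorem colon_span_singleton_monomial_eq_span_X_image {G : Set (MvPolynomial σ R)}
    {d : σ →₀ ℕ} {S : Set σ} (hS : ∀ v ∈ S, X v * monomial d 1 ∈ Ideal.span G)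
    (hG : ∀ g ∈ G, ∃ s, g = monomial s 1 ∧ ∃ v ∈ S, d v < s v) :
    (Ideal.span G).colon (Ideal.span {monomial d (1 : R)} : Set (MvPolynomial σ R)) =
      Ideal.span (X '' S) := by
  refine le_antisymm (fun p hp => ?_) (Ideal.span_le.mpr ?_)
  · have hG' : G = (fun s => monomial s 1) '' {s | monomial s 1 ∈ G ∧ ∃ v ∈ S, d v < s v} := by
      ext g
      constructor
      · intro hg
        obtain ⟨s, rfl, hs⟩ := hG g hg
        exact ⟨s, ⟨hg, hs⟩, rfl⟩
      · rintro ⟨s, ⟨hs, -⟩, rfl⟩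
        exact hs
    rw [Ideal.mem_colon_span_singleton, hG', mem_ideal_span_monomial_image] at hp
    refine mem_ideal_span_X_image.mpr fun m hm => ?_
    obtain ⟨s, ⟨-, v, hv, hlt⟩, hle⟩ := hp (m + d) (by simpa [coeff_mul_monomial] using hm)
    have := hle v
    simp only [Finsupp.coe_add, Pi.add_apply] at this
    exact ⟨v, hv, by omega⟩
  · rintro _ ⟨v, hv, rfl⟩
    exact Ideal.mem_colon_span_singleton.mpr (hS v hv)

end MvPolynomial

namespace Anticycle

open scoped Pointwise

variable (K : Type*) [Field K] (n : ℕ)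

@[simp] lemma vx_val : (vx n : ℕ) = 0 := rfl
@[simp] lemma vz1_val : (vz1 n : ℕ) = 1 := rfl
@[simp] lemma vz2_val : (vz2 n : ℕ) = n + 2 := rfl
@[simp] lemma vy_val (l : Fin n) : (vy n l : ℕ) = l + 2 := rfl

lemma vertex_cases (w : Fin (n + 3)) : w = vx n ∨ w = vz1 n ∨ w = vz2 n ∨ ∃ l, w = vy n l := by
  rcases w with ⟨w, hw⟩
  simp only [Fin.ext_iff, vx_val, vz1_val, vz2_val, vy_val]
  by_cases h : 2 ≤ w ∧ w ≤ n + 1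
  · exact Or.inr (Or.inr (Or.inr ⟨⟨w - 2, by omega⟩, by simp only; omega⟩))
  · omega

def edgeGens : Set (MvPolynomial (Fin (n + 3)) K) :=
  { m | ∃ a b : Fin (n + 3), 1 ≤ (a : ℕ) ∧ (a : ℕ) + 2 ≤ (b : ℕ) ∧ m = X a * X b }

def xzzyGens : Set (MvPolynomial (Fin (n + 3)) K) :=
  { m | ∃ l : Fin n, m = X (vx n) * X (vz1 n) * X (vz2 n) * X (vy n l) }

def xyyz₂Gens : Set (MvPolynomial (Fin (n + 3)) K) :=
  { m | ∃ k l : Fin n, k ≤ l ∧ ¬((k : ℕ) = n - 1 ∧ (l : ℕ) = n - 1) ∧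
    m = X (vx n) * X (vy n k) * X (vy n l) * X (vz2 n) }

def xyyz₁Gens : Set (MvPolynomial (Fin (n + 3)) K) :=
  { m | ∃ k l : Fin n, k ≤ l ∧ ¬((k : ℕ) = 0 ∧ (l : ℕ) = 0) ∧
    m = X (vx n) * X (vy n k) * X (vy n l) * X (vz1 n) }

def xyyyGens : Set (MvPolynomial (Fin (n + 3)) K) :=
  { m | ∃ i' j' k' : Fin n, i' ≤ j' ∧ j' ≤ k' ∧ (i' : ℕ) + 2 ≤ (k' : ℕ) ∧
    m = X (vx n) * X (vy n i') * X (vy n j') * X (vy n k') }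

def xxyyGens (i j : Fin n) : Set (MvPolynomial (Fin (n + 3)) K) :=
  { m | ∃ k l : Fin n, k ≤ l ∧ ¬((k : ℕ) = 0 ∧ (l : ℕ) = 0) ∧ (k < i ∨ (k = i ∧ l < j)) ∧
    m = X (vx n) * X (vx n) * X (vy n k) * X (vy n l) }

noncomputable def Iprime (i j : Fin n) : Ideal (MvPolynomial (Fin (n + 3)) K) :=
  Jideal K n ^ 2 + Ideal.span (xzzyGens K n) + Ideal.span (xyyz₂Gens K n) +
    Ideal.span (xyyz₁Gens K n) + Ideal.span (xyyyGens K n) + Ideal.span (xxyyGens K n i j)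

def gens (i j : Fin n) : Set (MvPolynomial (Fin (n + 3)) K) :=
  edgeGens K n * edgeGens K n ∪ xzzyGens K n ∪ xyyz₂Gens K n ∪ xyyz₁Gens K n ∪
    xyyyGens K n ∪ xxyyGens K n i j

lemma Iprime_eq_span_gens (i j : Fin n) : Iprime K n i j = Ideal.span (gens K n i j) := by
  simp only [Iprime, gens, Jideal, pow_two, Ideal.span_mul_span', Ideal.span_union,
    Submodule.add_eq_sup]
  rfl

noncomputable def divisorExp (i j : Fin n) : Fin (n + 3) →₀ ℕ :=
  quadExp (vx n) (vx n) (vy n i) (vy n j)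

def colonVars (i j : Fin n) : Set (Fin (n + 3)) :=
  { v | X v * monomial (divisorExp n i j) 1 ∈ Ideal.span (gens K n i j) }

variable {K n} {i j : Fin n}

lemma mem_colonVars_of_mul_eq {v : Fin (n + 3)} {g : MvPolynomial (Fin (n + 3)) K}
    (hg : g ∈ gens K n i j) (c : MvPolynomial (Fin (n + 3)) K)
    (h : X v * (X (vx n) * X (vx n) * X (vy n i) * X (vy n j)) = c * g) :
    v ∈ colonVars K n i j := by
  change X v * monomial (divisorExp n i j) (1 : K) ∈ Ideal.span (gens K n i j)
  rw [divisorExp, ← X_mul_X_mul_X_mul_X, h]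
  exact Ideal.mul_mem_left _ _ (Ideal.subset_span hg)

lemma vz1_mem_colonVars (hij : i ≤ j) (h11 : ¬((i : ℕ) = 0 ∧ (j : ℕ) = 0)) :
    vz1 n ∈ colonVars K n i j :=
  mem_colonVars_of_mul_eq (Or.inl (Or.inl (Or.inr ⟨i, j, hij, h11, rfl⟩))) (X (vx n)) (by ring)

lemma vz2_mem_colonVars (hij : i ≤ j) (hnn : ¬((i : ℕ) = n - 1 ∧ (j : ℕ) = n - 1)) :
    vz2 n ∈ colonVars K n i j :=
  mem_colonVars_of_mul_eq (Or.inl (Or.inl (Or.inl (Or.inr ⟨i, j, hij, hnn, rfl⟩)))) (X (vx n))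
    (by ring)

lemma vy_mem_colonVars_of_lt (hij : i ≤ j) {l : Fin n} (hlj : l < j)
    (h01 : ¬((i : ℕ) = 0 ∧ (l : ℕ) = 0 ∧ (j : ℕ) = 1)) : vy n l ∈ colonVars K n i j := by
  rcases lt_or_ge l i with hli | hil
  · refine mem_colonVars_of_mul_eq (Or.inr ⟨l, i, hli.le, by omega, Or.inl hli, rfl⟩)
      (X (vy n j)) (by ring)
  by_cases h00 : (i : ℕ) = 0 ∧ (l : ℕ) = 0
  · refine mem_colonVars_of_mul_eq (Or.inl (Or.inr ⟨i, l, j, hil, hlj.le, by omega, rfl⟩))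
      (X (vx n)) (by ring)
  · exact mem_colonVars_of_mul_eq (Or.inr ⟨i, l, hil, h00, Or.inr ⟨rfl, hlj⟩, rfl⟩)
      (X (vy n j)) (by ring)

lemma vy_mem_colonVars_of_add_two_le (hij : i ≤ j) {l : Fin n} (hil : (i : ℕ) + 2 ≤ l) :
    vy n l ∈ colonVars K n i j := by
  rcases le_or_gt j l with hjl | hlj
  · exact mem_colonVars_of_mul_eq (Or.inl (Or.inr ⟨i, j, l, hij, hjl, hil, rfl⟩))
      (X (vx n)) (by ring)
  · exact mem_colonVars_of_mul_eq (Or.inl (Or.inr ⟨i, l, j, by omega, hlj.le, by omega, rfl⟩))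
      (X (vx n)) (by ring)

lemma mem_colonVars_of_val (hij : i ≤ j) (h11 : ¬((i : ℕ) = 0 ∧ (j : ℕ) = 0))
    {w : Fin (n + 3)} (hw0 : (w : ℕ) ≠ 0)
    (hw : (w : ℕ) < (i : ℕ) + 2 ∨ (i : ℕ) + 4 ≤ (w : ℕ) ∨ (i : ℕ) + 2 ≤ (j : ℕ)) :
    w ∈ colonVars K n i j := by
  have hj : (j : ℕ) < n := j.isLt
  rcases vertex_cases n w with rfl | rfl | rfl | ⟨l, rfl⟩
  · exact absurd rfl hw0
  · exact vz1_mem_colonVars hij h11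
  · exact vz2_mem_colonVars hij (by simp only [vz2_val] at hw; omega)
  · simp only [vy_val] at hw
    rcases lt_or_ge l j with hlj | hjl
    · exact vy_mem_colonVars_of_lt hij hlj (by omega)
    · exact vy_mem_colonVars_of_add_two_le hij (by omega)

lemma exists_lt_of_add_two_le (hij : i ≤ j) (h11 : ¬((i : ℕ) = 0 ∧ (j : ℕ) = 0))
    (hj : (i : ℕ) + 2 ≤ j) {s : Fin (n + 3) →₀ ℕ} (hdeg : s.degree = 4) (hx : s (vx n) < 2) :
    ∃ v ∈ colonVars K n i j, divisorExp n i j v < s v := by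
  obtain ⟨v, hvx, hv⟩ :=
    Finsupp.exists_ne_lt_apply_of_degree_eq (d := divisorExp n i j) (x := vx n)
      (by rw [hdeg, divisorExp, degree_quadExp]) (by simpa [divisorExp, Fin.ext_iff] using hx)
  exact ⟨v, mem_colonVars_of_val hij h11 (fun h => hvx (Fin.ext h)) (Or.inr (Or.inr hj)), hv⟩

lemma exists_lt_edge_mul_edge (hij : i ≤ j) (h11 : ¬((i : ℕ) = 0 ∧ (j : ℕ) = 0))
    {a b a' b' : Fin (n + 3)} (ha : 1 ≤ (a : ℕ)) (hab : (a : ℕ) + 2 ≤ b) (ha' : 1 ≤ (a' : ℕ))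
    (hab' : (a' : ℕ) + 2 ≤ b') :
    ∃ v ∈ colonVars K n i j, divisorExp n i j v < quadExp a b a' b' v := by
  rcases le_or_gt ((i : ℕ) + 2) j with hj | hj
  · refine exists_lt_of_add_two_le hij h11 hj (degree_quadExp ..) ?_
    simp only [quadExp_apply, Fin.ext_iff, vx_val]
    grind
  by_cases hA : (a : ℕ) = i + 2 ∨ (a : ℕ) = i + 3
  · refine ⟨b, mem_colonVars_of_val hij h11 (by omega) (by omega), ?_⟩
    simp only [divisorExp, quadExp_apply, Fin.ext_iff, vx_val, vy_val]
    grind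
  · refine ⟨a, mem_colonVars_of_val hij h11 (by omega) (by omega), ?_⟩
    simp only [divisorExp, quadExp_apply, Fin.ext_iff, vx_val, vy_val]
    grind

lemma exists_lt_xyyz₂ (hij : i ≤ j) {k l : Fin n} (hkl : k ≤ l)
    (hnn : ¬((k : ℕ) = n - 1 ∧ (l : ℕ) = n - 1)) :
    ∃ v ∈ colonVars K n i j, divisorExp n i j v < quadExp (vx n) (vy n k) (vy n l) (vz2 n) v := by
  have hl : (l : ℕ) < n := l.isLt
  by_cases hij' : (i : ℕ) = n - 1 ∧ (j : ℕ) = n - 1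
  · refine ⟨vy n k, vy_mem_colonVars_of_lt hij (by omega) (by omega), ?_⟩
    simp only [divisorExp, quadExp_apply, Fin.ext_iff, vx_val, vz2_val, vy_val]
    grind
  · refine ⟨vz2 n, vz2_mem_colonVars hij hij', ?_⟩
    simp only [divisorExp, quadExp_apply, Fin.ext_iff, vx_val, vz2_val, vy_val]
    grind

lemma exists_lt_xyyy (hij : i ≤ j) (h11 : ¬((i : ℕ) = 0 ∧ (j : ℕ) = 0)) {a b c : Fin n}
    (hac : (a : ℕ) + 2 ≤ c) :
    ∃ v ∈ colonVars K n i j, divisorExp n i j v < quadExp (vx n) (vy n a) (vy n b) (vy n c) v := by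
  rcases le_or_gt ((i : ℕ) + 2) j with hj | hj
  · refine exists_lt_of_add_two_le hij h11 hj (degree_quadExp ..) ?_
    simp only [quadExp_apply, Fin.ext_iff, vx_val, vy_val]
    grind
  by_cases hc : (i : ℕ) + 2 ≤ c
  · refine ⟨vy n c, vy_mem_colonVars_of_add_two_le hij hc, ?_⟩
    simp only [divisorExp, quadExp_apply, Fin.ext_iff, vx_val, vy_val]
    grind
  · refine ⟨vy n a, vy_mem_colonVars_of_lt hij (by omega) (by omega), ?_⟩
    simp only [divisorExp, quadExp_apply, Fin.ext_iff, vx_val, vy_val]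
    grind

lemma exists_lt_xxyy (hij : i ≤ j) {k l : Fin n}
    (h00 : ¬((k : ℕ) = 0 ∧ (l : ℕ) = 0)) (hlex : k < i ∨ (k = i ∧ l < j)) :
    ∃ v ∈ colonVars K n i j, divisorExp n i j v < quadExp (vx n) (vx n) (vy n k) (vy n l) v := by
  rcases hlex with hki | ⟨rfl, hlj⟩
  · refine ⟨vy n k, vy_mem_colonVars_of_lt hij (hki.trans_le hij) (by omega), ?_⟩
    simp only [divisorExp, quadExp_apply, Fin.ext_iff, vx_val, vy_val]
    grind
  · refine ⟨vy n l, vy_mem_colonVars_of_lt hij hlj (by omega), ?_⟩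
    simp only [divisorExp, quadExp_apply, Fin.ext_iff, vx_val, vy_val]
    grind

lemma exists_colonVars_lt_of_mem_gens (hij : i ≤ j) (h11 : ¬((i : ℕ) = 0 ∧ (j : ℕ) = 0)) :
    ∀ g ∈ gens K n i j, ∃ s, g = monomial s 1 ∧
      ∃ v ∈ colonVars K n i j, divisorExp n i j v < s v := by
  rintro g (((((⟨_, ⟨a, b, ha, hab, rfl⟩, _, ⟨a', b', ha', hab', rfl⟩, rfl⟩ | ⟨l, rfl⟩) |
    ⟨k, l, hkl, hnn, rfl⟩) | ⟨k, l, -, -, rfl⟩) | ⟨a, b, c, -, -, hac, rfl⟩) |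
    ⟨k, l, -, h00, hlex, rfl⟩)
  · exact ⟨_, (mul_assoc _ _ _).symm.trans (X_mul_X_mul_X_mul_X ..),
      exists_lt_edge_mul_edge hij h11 ha hab ha' hab'⟩
  · refine ⟨_, X_mul_X_mul_X_mul_X .., vz1 n, vz1_mem_colonVars hij h11, ?_⟩
    simp only [divisorExp, quadExp_apply, Fin.ext_iff, vx_val, vz1_val, vz2_val, vy_val]
    grind
  · exact ⟨_, X_mul_X_mul_X_mul_X .., exists_lt_xyyz₂ hij hkl hnn⟩
  · refine ⟨_, X_mul_X_mul_X_mul_X .., vz1 n, vz1_mem_colonVars hij h11, ?_⟩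
    simp only [divisorExp, quadExp_apply, Fin.ext_iff, vx_val, vz1_val, vy_val]
    grind
  · exact ⟨_, X_mul_X_mul_X_mul_X .., exists_lt_xyyy hij h11 hac⟩
  · exact ⟨_, X_mul_X_mul_X_mul_X .., exists_lt_xxyy hij h00 hlex⟩

end Anticycle

open Anticycle in
theorem stage3a_colon_general (K : Type*) [Field K] (n : ℕ) (i j : Fin n)
    (hij : i ≤ j) (h11 : ¬((i : ℕ) = 0 ∧ (j : ℕ) = 0)) :
    ∃ S : Set (Fin (n + 3)),
      ((Jideal K n ^ 2 +
          Ideal.span { m | ∃ l : Fin n,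
            m = X (vx n) * X (vz1 n) * X (vz2 n) * X (vy n l) } +
          Ideal.span { m | ∃ k l : Fin n, k ≤ l ∧
            ¬((k : ℕ) = n - 1 ∧ (l : ℕ) = n - 1) ∧
            m = X (vx n) * X (vy n k) * X (vy n l) * X (vz2 n) } +
          Ideal.span { m | ∃ k l : Fin n, k ≤ l ∧
            ¬((k : ℕ) = 0 ∧ (l : ℕ) = 0) ∧
            m = X (vx n) * X (vy n k) * X (vy n l) * X (vz1 n) } +
          Ideal.span { m | ∃ i' j' k' : Fin n, i' ≤ j' ∧ j' ≤ k' ∧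
            (i' : ℕ) + 2 ≤ (k' : ℕ) ∧
            m = X (vx n) * X (vy n i') * X (vy n j') * X (vy n k') } +
          Ideal.span { m | ∃ k l : Fin n, k ≤ l ∧
            ¬((k : ℕ) = 0 ∧ (l : ℕ) = 0) ∧
            (k < i ∨ (k = i ∧ l < j)) ∧
            m = X (vx n) * X (vx n) * X (vy n k) * X (vy n l) }).colon
        ((Ideal.span {X (vx n) * X (vx n) * X (vy n i) * X (vy n j)} :
            Ideal (MvPolynomial (Fin (n + 3)) K)) : Set (MvPolynomial (Fin (n + 3)) K))) =
      Ideal.span (MvPolynomial.X '' S) := by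
  refine ⟨colonVars K n i j, ?_⟩
  change (Iprime K n i j).colon _ = _
  rw [Iprime_eq_span_gens, X_mul_X_mul_X_mul_X]
  exact colon_span_singleton_monomial_eq_span_X_image (fun _ hv => hv)
    (exists_colonVars_lt_of_mem_gens hij h11)

/-- Fix `1 ≤ i ≤ j ≤ n` with `(i,j) ≠ (1,1)`.  With
`I' = J² + (x z₁ z₂ y_l : 1 ≤ l ≤ n) + (x y_k y_l z₂ : k ≤ l, (k,l) ≠ (n,n)) +
(x y_k y_l z₁ : k ≤ l, (k,l) ≠ (1,1)) + (x y_{i'} y_{j'} y_{k'} : i' ≤ j' ≤ k',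
i' + 2 ≤ k') + (x² y_k y_l : k ≤ l, (k,l) ≠ (1,1), (k,l)` dictionary-smaller than
`(i,j))`, the colon ideal `I' : (x² y_i y_j)` is generated by a subset of the variables.
(Indices are 0-indexed.) -/
theorem stage3a_colon (K : Type*) [Field K] (n : ℕ) (hn : 2 ≤ n) (i j : Fin n)
    (hij : i ≤ j) (h11 : ¬((i : ℕ) = 0 ∧ (j : ℕ) = 0)) :
    ∃ S : Set (Fin (n + 3)),
      ((Jideal K n ^ 2 +
          Ideal.span { m | ∃ l : Fin n,
            m = X (vx n) * X (vz1 n) * X (vz2 n) * X (vy n l) } +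
          Ideal.span { m | ∃ k l : Fin n, k ≤ l ∧
            ¬((k : ℕ) = n - 1 ∧ (l : ℕ) = n - 1) ∧
            m = X (vx n) * X (vy n k) * X (vy n l) * X (vz2 n) } +
          Ideal.span { m | ∃ k l : Fin n, k ≤ l ∧
            ¬((k : ℕ) = 0 ∧ (l : ℕ) = 0) ∧
            m = X (vx n) * X (vy n k) * X (vy n l) * X (vz1 n) } +
          Ideal.span { m | ∃ i' j' k' : Fin n, i' ≤ j' ∧ j' ≤ k' ∧
            (i' : ℕ) + 2 ≤ (k' : ℕ) ∧
            m = X (vx n) * X (vy n i') * X (vy n j') * X (vy n k') } +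
          Ideal.span { m | ∃ k l : Fin n, k ≤ l ∧
            ¬((k : ℕ) = 0 ∧ (l : ℕ) = 0) ∧
            (k < i ∨ (k = i ∧ l < j)) ∧
            m = X (vx n) * X (vx n) * X (vy n k) * X (vy n l) }).colon
        ((Ideal.span {X (vx n) * X (vx n) * X (vy n i) * X (vy n j)} :
            Ideal (MvPolynomial (Fin (n + 3)) K)) : Set (MvPolynomial (Fin (n + 3)) K))) =
      Ideal.span (MvPolynomial.X '' S) :=
  stage3a_colon_general K n i j hij h11
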